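/- Let p > 0 and q be coprime integers, and let q* be an integer with 0 < q* < p and p* an integer satisfying p*p + q*q = 1. Then p·(-12·s(q,p)) + (q + q*) is an integer divisible by p; equivalently, there exists an integer b with -12·s(q,p) = b - (q + q*)/p. -/

import Mathlib

/-!
Write `r k = k q mod p`. Since `k ↦ r k` permutes `0, …, p - 1`, the sawtooth values give
`s(q,p) = (∑ k r k) / p² - (p - 1) / 4`. The same permutation gives `∑ (r k)² = ∑ k²`, and
`p ∣ k q - r k` makes `(k q - r k)²` vanish mod `p²`; hence `2 q ∑ k r k ≡ (1 + q²) ∑ k² (mod p²)`.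
With `6 ∑ k² = p (p - 1) (2p - 1)` and `q q* ≡ 1 (mod p)` this becomes
`q (12 ∑ k r k - p (q + q*)) ≡ 0 (mod p²)`, and `q` is invertible mod `p²`.
-/

/-- The sawtooth function `((x))`. -/
noncomputable def saw (x : ℚ) : ℚ := if x.den = 1 then 0 else x - ⌊x⌋ - 1/2

/-- The Dedekind sum `s(q, p) = ∑_{k=0}^{p-1} ((k/p)) ((kq/p))`. -/
noncomputable def dedekindSum (q p : ℤ) : ℚ :=
  ∑ k ∈ Finset.range p.natAbs, saw (k / p) * saw (k * q / p)

open Finset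

lemma six_mul_sum_range_sq (n : ℕ) :
    6 * ∑ k ∈ range n, (k : ℤ) ^ 2 = n * (n - 1) * (2 * n - 1) := by
  induction n with
  | zero => simp
  | succ m ih =>
    rw [sum_range_succ, mul_add, ih]
    push_cast
    ring

lemma sum_range_comp_mul_emod {M : Type*} [AddCommMonoid M] {n : ℕ} {q : ℤ}
    (hq : IsCoprime (n : ℤ) q) (f : ℤ → M) :
    ∑ k ∈ range n, f (k * q % n) = ∑ k ∈ range n, f k := by
  rcases Nat.eq_zero_or_pos n with rfl | hn
  · simp
  have hn' : (0 : ℤ) < n := by exact_mod_cast hn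
  have hmaps : Set.MapsTo (fun k : ℕ ↦ ((k * q % n).toNat)) (range n) (range n) := by
    intro k _
    have := Int.emod_lt_of_pos (k * q) hn'
    simp only [coe_range, Set.mem_Iio]
    omega
  have hinj : Set.InjOn (fun k : ℕ ↦ ((k * q % n).toNat)) (range n) := by
    intro a ha b hb hab
    simp only [coe_range, Set.mem_Iio] at ha hb
    have h0 := Int.emod_nonneg (a * q) hn'.ne'
    have h0' := Int.emod_nonneg (b * q) hn'.ne'
    have hmod : a * q ≡ b * q [ZMOD n] := by
      change _ % _ = _ % _
      simp only at hab
      omega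
    have hdvd : (n : ℤ) ∣ (b - a : ℤ) :=
      hq.dvd_of_dvd_mul_right (by simpa [sub_mul] using hmod.dvd)
    have := Int.eq_zero_of_abs_lt_dvd hdvd (by rw [abs_lt]; omega)
    omega
  refine sum_nbij _ hmaps hinj (surjOn_of_injOn_of_card_le _ hmaps hinj le_rfl) ?_
  intro k _
  rw [Int.toNat_of_nonneg (Int.emod_nonneg _ hn'.ne')]

lemma saw_intCast_div_natCast {a : ℤ} {n : ℕ} (hn : n ≠ 0) (h : ¬ (n : ℤ) ∣ a) :
    saw ((a : ℚ) / n) = ((a % n : ℤ) : ℚ) / n - 1 / 2 := by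
  have hden : ((a : ℚ) / n).den ≠ 1 := by
    rwa [Ne, ← Int.cast_natCast (R := ℚ) n, Rat.den_div_intCast_eq_one_iff a n (by omega)]
  rw [saw, if_neg hden, Rat.floor_intCast_div_natCast, Int.emod_def]
  push_cast
  field_simp

lemma dedekindSum_natCast_eq {n : ℕ} (hn : n ≠ 0) {q : ℤ} (hq : IsCoprime (n : ℤ) q) :
    dedekindSum q n = ((∑ k ∈ range n, k * (k * q % n) : ℤ) : ℚ) / n ^ 2 - (n - 1) / 4 := by
  set r : ℕ → ℚ := fun k ↦ ((k * q % n : ℤ) : ℚ)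
  have h0 : 0 ∈ range n := mem_range.mpr (Nat.pos_of_ne_zero hn)
  have hterm : ∀ k ∈ (range n).erase 0,
      saw (k / n) * saw (k * q / n) = ((k : ℚ) / n - 1 / 2) * (r k / n - 1 / 2) := by
    intro k hk
    rw [mem_erase, mem_range] at hk
    have hk' : ¬ (n : ℤ) ∣ k :=
      fun h ↦ hk.1 (Nat.eq_zero_of_dvd_of_lt (by exact_mod_cast h) hk.2)
    have hkq : ¬ (n : ℤ) ∣ k * q := fun h ↦ hk' (hq.dvd_of_dvd_mul_right h)
    have e1 := saw_intCast_div_natCast hn hk'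
    have e2 := saw_intCast_div_natCast hn hkq
    have hmod : (k : ℤ) % n = k := Int.emod_eq_of_lt (by positivity) (by omega)
    push_cast [hmod] at e1 e2
    rw [e1, e2]
  have hsaw : dedekindSum q n =
      ∑ k ∈ range n, ((k : ℚ) / n - 1 / 2) * (r k / n - 1 / 2) - 1 / 4 := by
    have hsaw0 : saw 0 = 0 := by simp [saw]
    have hr0 : r 0 = 0 := by simp [r]
    rw [dedekindSum, Int.natAbs_natCast, ← add_sum_erase _ _ h0, ← add_sum_erase _ _ h0]
    simp only [Int.cast_natCast]
    rw [sum_congr rfl hterm]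
    simp only [Nat.cast_zero, zero_div, zero_mul, hsaw0, hr0]
    ring
  have hr : ∑ k ∈ range n, r k = ∑ k ∈ range n, (k : ℚ) := by
    simpa using sum_range_comp_mul_emod hq (Int.cast : ℤ → ℚ)
  have hgauss : (∑ k ∈ range n, (k : ℚ)) * 2 = n * (n - 1) := by
    have := congrArg (Nat.cast : ℕ → ℚ) (sum_range_id_mul_two n)
    push_cast [Nat.cast_sub (Nat.one_le_iff_ne_zero.mpr hn)] at this
    exact this
  have hexpand : ∀ k : ℕ, ((k : ℚ) / n - 1 / 2) * (r k / n - 1 / 2) =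
      k * r k / n ^ 2 - (k + r k) / (2 * n) + 1 / 4 := by
    intro k
    field_simp
    ring
  rw [hsaw, sum_congr rfl fun k _ ↦ hexpand k, sum_add_distrib, sum_sub_distrib, ← sum_div,
    ← sum_div, sum_add_distrib, hr, sum_const, card_range, nsmul_eq_mul]
  push_cast
  field_simp
  linear_combination (-4 * n : ℚ) * hgauss

lemma sq_dvd_twelve_mul_sum_mul_emod_sub {n : ℕ} {q qs : ℤ} (hinv : qs * q ≡ 1 [ZMOD n]) :
    (n : ℤ) ^ 2 ∣ 12 * ∑ k ∈ range n, k * (k * q % n) - n * (q + qs) := by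
  obtain ⟨t, ht⟩ := hinv.dvd
  have hq : IsCoprime (n : ℤ) q := ⟨t, qs, by linear_combination -ht⟩
  set T := ∑ k ∈ range n, (k : ℤ) * (k * q % n)
  set S := ∑ k ∈ range n, (k : ℤ) ^ 2
  have hS : 6 * S = n * (n - 1) * (2 * n - 1) := six_mul_sum_range_sq n
  have hsq : ∑ k ∈ range n, (k * q % n : ℤ) ^ 2 = S := sum_range_comp_mul_emod hq (· ^ 2)
  have hexp : ∑ k ∈ range n, ((k : ℤ) * q - k * q % n) ^ 2 =
      q ^ 2 * S - 2 * q * T + ∑ k ∈ range n, (k * q % n : ℤ) ^ 2 := by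
    simp only [S, T, mul_sum, ← sum_sub_distrib, ← sum_add_distrib]
    exact sum_congr rfl fun k _ ↦ by ring
  have hdvd : (n : ℤ) ^ 2 ∣ q ^ 2 * S - 2 * q * T + S := by
    have h := dvd_sum fun k (_ : k ∈ range n) ↦ pow_dvd_pow_of_dvd (Int.mod_modEq (k * q) n).dvd 2
    rwa [hexp, hsq] at h
  refine hq.pow_left.dvd_of_dvd_mul_left ?_
  have key : q * (12 * T - n * (q + qs)) =
      n ^ 2 * ((1 + q ^ 2) * (2 * n - 3) + t) - 6 * (q ^ 2 * S - 2 * q * T + S) := by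
    linear_combination (1 + q ^ 2) * hS + n * ht
  rw [key]
  exact dvd_sub (dvd_mul_right _ _) (dvd_mul_of_dvd_right hdvd 6)

theorem stmt_2_general (p q qs ps : ℤ) (hp : 0 < p) (hinv : ps * p + qs * q = 1) :
    ∃ b : ℤ, (-12 : ℚ) * dedekindSum q p = (b : ℚ) - ((q : ℚ) + qs) / p := by
  lift p to ℕ using hp.le
  have hinv' : qs * q ≡ 1 [ZMOD p] := Int.modEq_iff_dvd.mpr ⟨ps, by linear_combination -hinv⟩
  obtain ⟨c, hc⟩ := sq_dvd_twelve_mul_sum_mul_emod_sub hinv'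
  refine ⟨3 * (p - 1) - c, ?_⟩
  have hp' : (p : ℚ) ≠ 0 := by exact_mod_cast hp.ne'
  rw [dedekindSum_natCast_eq (by omega) ⟨ps, qs, hinv⟩, Int.cast_natCast]
  have hcast := congrArg (Int.cast : ℤ → ℚ) hc
  push_cast at hcast ⊢
  field_simp
  linear_combination -4 * hcast

theorem stmt_2 (p q qs ps : ℤ) (hp : 0 < p) (hpq : IsCoprime p q)
    (hqs : 0 < qs) (hqs' : qs < p) (hinv : ps * p + qs * q = 1) :
    ∃ b : ℤ, (-12 : ℚ) * dedekindSum q p = (b : ℚ) - ((q : ℚ) + qs) / p :=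
  stmt_2_general p q qs ps hp hinv
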